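/- Let μ be a probability measure on G = (ℤ/2ℤ)³ with a_max = μ({0}) and a_max ≤ 1/4. Suppose there is a decomposition G = X₁ ⊕ X₂ (X₁ ∈ 𝔄₁, X₂ ∈ 𝔄₂, X₁ ∩ X₂ = {0}) such that: (I.1) μ(x + X₁) = 1/4 for every x ∈ X₂; and (I.2a) μ(X₂) = 1/2. Then μ ∈ TEC(G). -/

import Mathlib

/-!
Write `X₁ = {0, a}` and `X₂ = {0, b, c, b + c}`. Condition I.1 spreads to `μ(x) + μ(x + a) = 1/4`
for every `x`, which kills `μ̂(y)` whenever `y ≠ 0` and `(a, y) = 1`; condition I.2a kills `μ̂` at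
the character that is trivial on `X₂` but not on `a`. So away from `0`, `μ̂` lives on the three
characters `y` with `(a, y) = -1` that are nontrivial on `X₂`. They are linearly independent, so
every sign pattern on them is realised by a character `(x, ·)`. If `|ν̂| = |μ̂|` then `ν̂ = ±μ̂`
pointwise, hence `ν̂ = (x, ·) μ̂`, which is the transform of `μₓ`; Fourier inversion gives `ν = μₓ`.
-/

open scoped BigOperators

/-- The group `G = (ℤ/2ℤ)³`. -/
abbrev G : Type := ZMod 2 × ZMod 2 × ZMod 2

/-- The character pairing `(x,y) = (-1)^(x₁y₁+x₂y₂+x₃y₃)`. -/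
noncomputable def pairing (x y : G) : ℝ :=
  (-1 : ℝ) ^ (x.1.val * y.1.val + x.2.1.val * y.2.1.val + x.2.2.val * y.2.2.val)

/-- A probability measure on `G`, given by its mass function. -/
def IsProb (p : G → ℝ) : Prop := (∀ x, 0 ≤ p x) ∧ ∑ x : G, p x = 1

/-- The characteristic function `μ̂(y) = Σ_x (x,y) μ({x})`. -/
noncomputable def charFn (p : G → ℝ) (y : G) : ℝ := ∑ x : G, pairing x y * p x

/-- The measure of a set `E ⊆ G`. -/
noncomputable def measOf (p : G → ℝ) (E : Set G) : ℝ := ∑ x : G, E.indicator p x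

/-- `μ` has a trivial equivalence class: every probability measure `ν` with
`|ν̂| = |μ̂|` is a shift `μₓ` of `μ` (central symmetry is the identity on `G`). -/
def TEC (p : G → ℝ) : Prop :=
  ∀ q : G → ℝ, IsProb q → (∀ y : G, |charFn q y| = |charFn p y|) →
    ∃ x : G, ∀ e : G, q e = p (e + x)

/-- `u(E) = max_{x ∈ E} μ({x})`. -/
noncomputable def uOf (p : G → ℝ) (E : Set G) : ℝ := sSup (p '' E)

/-- `v(E) = min_{x ∈ E} μ({x})`. -/
noncomputable def vOf (p : G → ℝ) (E : Set G) : ℝ := sInf (p '' E)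

/-- `μ ∈ U(E)` iff `2 u(E) > μ(E)`. -/
def USet (p : G → ℝ) (E : Set G) : Prop := measOf p E < 2 * uOf p E

/-- `μ ∈ V(E)` iff `1/2 + 2 v(E) < μ(E)`. -/
def VSet (p : G → ℝ) (E : Set G) : Prop := 1/2 + 2 * vOf p E < measOf p E

open Finset

lemma AddSubgroup.exists_coe_eq_pair_of_card_eq_two {A : Type*} [AddGroup A] {H : AddSubgroup A}
    (h : Nat.card H = 2) : ∃ a ≠ 0, (H : Set A) = {0, a} := by
  rw [← SetLike.coe_sort_coe, Nat.card_coe_set_eq, Set.ncard_eq_two] at h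
  obtain ⟨x, y, hxy, hH⟩ := h
  have h0 : (0 : A) ∈ (H : Set A) := H.zero_mem
  rw [hH] at h0
  rcases h0 with rfl | rfl
  · exact ⟨y, hxy.symm, hH⟩
  · exact ⟨x, hxy, hH.trans (Set.pair_comm _ _)⟩

lemma AddSubgroup.exists_coe_eq_of_card_eq_four {A : Type*} [AddGroup A]
    (h2 : ∀ x : A, x + x = 0) {H : AddSubgroup A} (h : Nat.card H = 4) :
    ∃ b c, (H : Set A) = {0, b, c, b + c} := by
  rw [← SetLike.coe_sort_coe, Nat.card_coe_set_eq] at h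
  have hfin : (H : Set A).Finite := Set.finite_of_ncard_ne_zero (by omega)
  obtain ⟨b, hb, hb0⟩ := Set.exists_ne_of_one_lt_ncard (s := H) (by omega) (0 : A)
  obtain ⟨c, hc, hc0b⟩ := Set.exists_mem_notMem_of_ncard_lt_ncard (s := {0, b})
    (by rw [h, Set.ncard_pair hb0.symm]; norm_num)
  simp only [Set.mem_insert_iff, Set.mem_singleton_iff, not_or] at hc0b
  obtain ⟨hc0, hcb⟩ := hc0b
  have hbc0 : b + c ≠ 0 := fun hbc => hcb (add_left_cancel (hbc.trans (h2 b).symm))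
  have hbcb : b + c ≠ b := fun hbc => hc0 (add_eq_left.1 hbc)
  have hbcc : b + c ≠ c := fun hbc => hb0 (add_eq_right.1 hbc)
  refine ⟨b, c, (Set.eq_of_subset_of_ncard_le ?_ ?_ hfin).symm⟩
  · simp only [Set.insert_subset_iff, Set.singleton_subset_iff, SetLike.mem_coe]
    exact ⟨H.zero_mem, hb, hc, H.add_mem hb hc⟩
  · rw [h, Set.ncard_insert_of_notMem (by simp [hb0.symm, Ne.symm hc0, hbc0.symm]),
      Set.ncard_insert_of_notMem (by simp [Ne.symm hcb, hbcb.symm]), Set.ncard_pair hbcc.symm]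

lemma AddSubgroup.mem_or_add_mem_of_sup_eq_top {A : Type*} [AddCommGroup A] {X₁ X₂ : AddSubgroup A}
    {a : A} (ha : a + a = 0) (hX₁ : (X₁ : Set A) = {0, a}) (hsup : X₁ ⊔ X₂ = ⊤) (x : A) :
    x ∈ X₂ ∨ x + a ∈ X₂ := by
  obtain ⟨x₁, hx₁, t, ht, rfl⟩ := AddSubgroup.mem_sup.1 (hsup ▸ AddSubgroup.mem_top x)
  rw [← SetLike.mem_coe, hX₁] at hx₁
  rcases hx₁ with rfl | rfl
  · left; rwa [zero_add]
  · right; rwa [add_right_comm, ha, zero_add]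

lemma zmod_two_eq_zero_or_one (u : ZMod 2) : u = 0 ∨ u = 1 := by
  revert u; decide

lemma neg_one_pow_val_add (u v : ZMod 2) :
    (-1 : ℝ) ^ (u + v).val = (-1) ^ u.val * (-1) ^ v.val := by
  rw [← pow_add, ZMod.val_add, ← neg_one_pow_eq_pow_mod_two]

lemma G.add_self_eq_zero (x : G) : x + x = 0 := CharTwo.add_self_eq_zero x

lemma G.add_eq_zero_iff {x y : G} : x + y = 0 ↔ x = y := by
  rw [add_eq_zero_iff_eq_neg, neg_eq_of_add_eq_zero_left (G.add_self_eq_zero y)]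

def dot (x y : G) : ZMod 2 := x.1 * y.1 + x.2.1 * y.2.1 + x.2.2 * y.2.2

lemma dot_comm (x y : G) : dot x y = dot y x := by
  simp only [dot]; ring

lemma dot_add_left (x x' y : G) : dot (x + x') y = dot x y + dot x' y := by
  simp only [dot, Prod.fst_add, Prod.snd_add]; ring

lemma dot_add_right (x y y' : G) : dot x (y + y') = dot x y + dot x y' := by
  rw [dot_comm, dot_add_left, dot_comm y, dot_comm y']

lemma dot_sub_right (x y y' : G) : dot x (y - y') = dot x y - dot x y' := by
  simp only [dot, Prod.fst_sub, Prod.snd_sub]; ring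

lemma dot_smul_left (e : ZMod 2) (x y : G) : dot (e • x) y = e * dot x y := by
  simp only [dot, Prod.smul_fst, Prod.smul_snd, smul_eq_mul]; ring

@[simp] lemma dot_zero_left (y : G) : dot 0 y = 0 := by simp [dot]

@[simp] lemma dot_zero_right (x : G) : dot x 0 = 0 := by simp [dot]

lemma eq_zero_of_forall_dot_eq_zero {z : G} (h : ∀ y, dot z y = 0) : z = 0 := by
  have h₁ := h (1, 0, 0)
  have h₂ := h (0, 1, 0)
  have h₃ := h (0, 0, 1)
  simp only [dot, mul_one, mul_zero, add_zero, zero_add] at h₁ h₂ h₃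
  exact Prod.ext h₁ (Prod.ext h₂ h₃)

lemma pairing_eq_neg_one_pow (x y : G) : pairing x y = (-1) ^ (dot x y).val := by
  rw [pairing, neg_one_pow_eq_pow_mod_two, ← ZMod.val_natCast]
  simp [dot]

lemma pairing_comm (x y : G) : pairing x y = pairing y x := by
  rw [pairing_eq_neg_one_pow, pairing_eq_neg_one_pow, dot_comm]

lemma pairing_add_left (x x' y : G) : pairing (x + x') y = pairing x y * pairing x' y := by
  simp only [pairing_eq_neg_one_pow, dot_add_left, neg_one_pow_val_add]

lemma pairing_add_right (x y y' : G) : pairing x (y + y') = pairing x y * pairing x y' := by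
  simp only [pairing_eq_neg_one_pow, dot_add_right, neg_one_pow_val_add]

lemma pairing_of_dot_eq_zero {x y : G} (h : dot x y = 0) : pairing x y = 1 := by
  simp [pairing_eq_neg_one_pow, h]

lemma pairing_of_dot_eq_one {x y : G} (h : dot x y = 1) : pairing x y = -1 := by
  simp [pairing_eq_neg_one_pow, h, ZMod.val_one]

lemma sum_pairing_right (x : G) : ∑ y, pairing x y = if x = 0 then 8 else 0 := by
  split_ifs with hx
  · simp [hx, pairing_of_dot_eq_zero]
  · obtain ⟨w, hw⟩ : ∃ w, dot x w = 1 := by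
      by_contra! h
      exact hx (eq_zero_of_forall_dot_eq_zero fun y =>
        (zmod_two_eq_zero_or_one _).resolve_right (h y))
    have hshift : ∑ y, pairing x (y + w) = ∑ y, pairing x y :=
      Fintype.sum_equiv (Equiv.addRight w) _ _ fun _ => rfl
    simp only [pairing_add_right, pairing_of_dot_eq_one hw, ← sum_mul] at hshift
    linarith

lemma sum_pairing_left (y : G) : ∑ x, pairing x y = if y = 0 then 8 else 0 := by
  simp only [pairing_comm _ y, sum_pairing_right]

lemma charFn_zero (f : G → ℝ) : charFn f 0 = ∑ x, f x := by
  simp [charFn, pairing_of_dot_eq_zero]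

lemma sum_pairing_mul_charFn (f : G → ℝ) (e : G) : ∑ y, pairing e y * charFn f y = 8 * f e := by
  calc ∑ y, pairing e y * charFn f y = ∑ x, (∑ y, pairing (e + x) y) * f x := by
        simp only [charFn, mul_sum, sum_mul, pairing_add_left, mul_assoc]
        exact sum_comm
    _ = 8 * f e := by
        simp only [sum_pairing_right, G.add_eq_zero_iff, ite_mul, zero_mul, sum_ite_eq,
          mem_univ, if_true]

lemma charFn_injective : Function.Injective charFn := fun q p h => funext fun e => by
  have he := sum_pairing_mul_charFn q e
  rw [h, sum_pairing_mul_charFn] at he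
  linarith

lemma charFn_comp_add_right (f : G → ℝ) (x y : G) :
    charFn (fun e => f (e + x)) y = pairing x y * charFn f y := by
  rw [charFn, ← Fintype.sum_equiv (Equiv.addRight x) _ _ fun _ => rfl, charFn, mul_sum]
  simp only [Equiv.coe_addRight, add_assoc, G.add_self_eq_zero, add_zero, pairing_add_left]
  exact sum_congr rfl fun _ _ => by ring

lemma charFn_eq_zero_of_forall_add_eq {f : G → ℝ} {a : G} {c : ℝ} (h : ∀ x, f x + f (x + a) = c)
    {y : G} (hy : y ≠ 0) (hay : dot a y = 0) : charFn f y = 0 := by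
  have hshift := charFn_comp_add_right f a y
  rw [pairing_of_dot_eq_zero hay, one_mul] at hshift
  have hsum : charFn f y + charFn (fun e => f (e + a)) y = (∑ x, pairing x y) * c := by
    simp only [charFn, ← sum_add_distrib, ← mul_add, h, sum_mul]
  rw [hshift, sum_pairing_left, if_neg hy, zero_mul] at hsum
  linarith

lemma charFn_eq_two_mul_measOf_sub (f : G → ℝ) {H : Set G} {y : G}
    (hin : ∀ x ∈ H, pairing x y = 1) (hout : ∀ x ∉ H, pairing x y = -1) :
    charFn f y = 2 * measOf f H - ∑ x, f x := by
  classical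
  simp only [charFn, measOf, mul_sum, ← sum_sub_distrib, Set.indicator_apply]
  refine sum_congr rfl fun x _ => ?_
  by_cases hx : x ∈ H
  · rw [hin x hx, if_pos hx]; ring
  · rw [hout x hx, if_neg hx]; ring

lemma charFn_eq_zero_of_measOf_eq_half {f : G → ℝ} (hf : ∑ x, f x = 1) {H : Set G}
    (hH : measOf f H = 1/2) {a y : G} (hcover : ∀ x, x ∈ H ∨ x + a ∈ H)
    (hHy : ∀ t ∈ H, dot t y = 0) (hay : dot a y = 1) : charFn f y = 0 := by
  have hout : ∀ x ∉ H, pairing x y = -1 := fun x hx => by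
    have hxa := hHy _ ((hcover x).resolve_left hx)
    rw [dot_add_left, hay, CharTwo.add_eq_zero] at hxa
    exact pairing_of_dot_eq_one hxa
  rw [charFn_eq_two_mul_measOf_sub f (fun x hx => pairing_of_dot_eq_zero (hHy x hx)) hout, hH, hf]
  norm_num

lemma measOf_pair (f : G → ℝ) {u v : G} (h : u ≠ v) : measOf f {u, v} = f u + f v := by
  classical
  rw [measOf, ← Finset.coe_pair, Finset.sum_indicator_subset _ (subset_univ _), sum_pair h]

theorem tec_of_charFn_eq_zero {p : G → ℝ} (hp : ∑ x, p x = 1) (S : Set G)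
    (hS : ∀ T : Set G, ∃ x, ∀ y ∈ S, (dot x y = 1 ↔ y ∈ T))
    (hzero : ∀ y, y ≠ 0 → y ∉ S → charFn p y = 0) : TEC p := by
  intro q hq habs
  obtain ⟨x, hx⟩ := hS {y | charFn q y ≠ charFn p y}
  have hcharFn : ∀ y, charFn q y = pairing x y * charFn p y := by
    intro y
    by_cases hy0 : y = 0
    · rw [hy0, charFn_zero, charFn_zero, hq.2, hp, pairing_of_dot_eq_zero (dot_zero_right x),
        one_mul]
    by_cases hyS : y ∈ S
    · have hxy := hx y hyS
      by_cases hyT : charFn q y = charFn p y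
      · have hxy0 := (zmod_two_eq_zero_or_one _).resolve_right fun h => hxy.1 h hyT
        rw [pairing_of_dot_eq_zero hxy0, one_mul, hyT]
      · rw [pairing_of_dot_eq_one (hxy.2 hyT), neg_one_mul,
          (abs_eq_abs.1 (habs y)).resolve_left hyT]
    · have hpy := hzero y hy0 hyS
      rw [hpy, mul_zero, ← abs_eq_zero, habs y, hpy, abs_zero]
  refine ⟨x, congrFun (charFn_injective (funext fun y => ?_))⟩
  rw [hcharFn, charFn_comp_add_right]

lemma span_eq_top_of_sup_eq_top {X₁ X₂ : AddSubgroup G} {a b c : G}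
    (hX₁ : (X₁ : Set G) = {0, a}) (hX₂ : (X₂ : Set G) = {0, b, c, b + c}) (hsup : X₁ ⊔ X₂ = ⊤) :
    Submodule.span (ZMod 2) {a, b, c} = ⊤ := by
  set V := Submodule.span (ZMod 2) ({a, b, c} : Set G)
  have ha : a ∈ V := Submodule.subset_span (by simp)
  have hb : b ∈ V := Submodule.subset_span (by simp)
  have hc : c ∈ V := Submodule.subset_span (by simp)
  have hle : X₁ ⊔ X₂ ≤ V.toAddSubgroup := by
    refine sup_le (fun x hx => ?_) (fun x hx => ?_)
    · rw [← SetLike.mem_coe, hX₁] at hx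
      rcases hx with rfl | rfl
      exacts [V.zero_mem, ha]
    · rw [← SetLike.mem_coe, hX₂] at hx
      rcases hx with rfl | rfl | rfl | rfl
      exacts [V.zero_mem, hb, hc, V.add_mem hb hc]
  exact eq_top_iff.2 fun x _ => hle (hsup ▸ AddSubgroup.mem_top x)

lemma eq_of_dot_eq_of_span {a b c : G} (hspan : Submodule.span (ZMod 2) {a, b, c} = ⊤)
    {y y' : G} (ha : dot a y = dot a y') (hb : dot b y = dot b y') (hc : dot c y = dot c y') :
    y = y' := by
  let φ : G →ₗ[ZMod 2] ZMod 2 :=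
    { toFun := fun x => dot x (y - y')
      map_add' := fun x x' => dot_add_left x x' _
      map_smul' := fun e x => dot_smul_left e x _ }
  have hker : Submodule.span (ZMod 2) {a, b, c} ≤ LinearMap.ker φ :=
    Submodule.span_le.2 (by simp [Set.insert_subset_iff, φ, dot_sub_right, ha, hb, hc])
  rw [hspan] at hker
  rw [← sub_eq_zero]
  exact eq_zero_of_forall_dot_eq_zero fun x => by rw [dot_comm]; exact hker Submodule.mem_top

lemma exists_affine_eq_of_ne_zero (f : ZMod 2 → ZMod 2 → ZMod 2) :
    ∃ e₁ e₂ e₃ : ZMod 2, ∀ β γ, (β = 1 ∨ γ = 1) → e₁ + e₂ * β + e₃ * γ = f β γ := by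
  refine ⟨f 1 0 + f 0 1 + f 1 1, f 0 1 + f 1 1, f 1 0 + f 1 1, fun β γ h => ?_⟩
  have key : ∀ u v w : ZMod 2, u + v + w + (v + w) = u ∧ u + v + w + (u + w) = v ∧
      u + v + w + (v + w) + (u + w) = w := by decide
  obtain ⟨h₁, h₂, h₃⟩ := key (f 1 0) (f 0 1) (f 1 1)
  rcases zmod_two_eq_zero_or_one β with rfl | rfl <;>
    rcases zmod_two_eq_zero_or_one γ with rfl | rfl <;> simp_all

lemma exists_dot_eq_one_iff {a b c : G} (hspan : Submodule.span (ZMod 2) {a, b, c} = ⊤)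
    (T : Set G) : ∃ x, ∀ y, dot a y = 1 → (dot b y = 1 ∨ dot c y = 1) → (dot x y = 1 ↔ y ∈ T) := by
  classical
  obtain ⟨e₁, e₂, e₃, he⟩ := exists_affine_eq_of_ne_zero fun β γ =>
    if ∃ y' ∈ T, dot a y' = 1 ∧ dot b y' = β ∧ dot c y' = γ then 1 else 0
  -- On `dot a y = 1`, `dot x y` is the affine function `e₁ + e₂ β + e₃ γ` of
  -- `(β, γ) = (dot b y, dot c y)`, and `y` is determined by `(β, γ)`.
  refine ⟨e₁ • a + e₂ • b + e₃ • c, fun y hay hbc => ?_⟩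
  rw [dot_add_left, dot_add_left, dot_smul_left, dot_smul_left, dot_smul_left, hay, mul_one,
    he _ _ hbc]
  split_ifs with hT
  · obtain ⟨y', hy'T, hay', hby', hcy'⟩ := hT
    simpa [eq_of_dot_eq_of_span hspan (hay'.trans hay.symm) hby' hcy'] using hy'T
  · simpa using fun hyT => hT ⟨y, hyT, hay, rfl, rfl⟩

theorem stmt0_general (p : G → ℝ) (hp : IsProb p)
    (X₁ X₂ : AddSubgroup G) (hX₁ : Nat.card X₁ = 2) (hX₂ : Nat.card X₂ = 4)
    (hsup : X₁ ⊔ X₂ = ⊤)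
    (hI1 : ∀ x ∈ X₂, measOf p ((x + ·) '' (X₁ : Set G)) = 1/4)
    (hI2a : measOf p (X₂ : Set G) = 1/2) :
    TEC p := by
  obtain ⟨a, ha0, hX₁a⟩ := AddSubgroup.exists_coe_eq_pair_of_card_eq_two hX₁
  obtain ⟨b, c, hX₂bc⟩ := AddSubgroup.exists_coe_eq_of_card_eq_four G.add_self_eq_zero hX₂
  have hcover := AddSubgroup.mem_or_add_mem_of_sup_eq_top (G.add_self_eq_zero a) hX₁a hsup
  have hpair : ∀ x, p x + p (x + a) = 1/4 := by
    have hX₂pair : ∀ t ∈ X₂, p t + p (t + a) = 1/4 := fun t ht => by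
      rw [← hI1 t ht, hX₁a, Set.image_pair, add_zero, measOf_pair p (by simpa using ha0)]
    intro x
    rcases hcover x with hx | hx
    · exact hX₂pair x hx
    · have hxa := hX₂pair _ hx
      rwa [add_assoc, G.add_self_eq_zero, add_zero, add_comm] at hxa
  refine tec_of_charFn_eq_zero hp.2 {y | dot a y = 1 ∧ (dot b y = 1 ∨ dot c y = 1)}
    (fun T => (exists_dot_eq_one_iff (span_eq_top_of_sup_eq_top hX₁a hX₂bc hsup) T).imp
      fun x hx y hy => hx y hy.1 hy.2) fun y hy0 hyS => ?_
  rcases zmod_two_eq_zero_or_one (dot a y) with hay | hay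
  · exact charFn_eq_zero_of_forall_add_eq hpair hy0 hay
  · obtain ⟨hb, hc⟩ := not_or.1 fun h => hyS ⟨hay, h⟩
    replace hb := (zmod_two_eq_zero_or_one _).resolve_right hb
    replace hc := (zmod_two_eq_zero_or_one _).resolve_right hc
    have hX₂y : ∀ t ∈ (X₂ : Set G), dot t y = 0 := by
      rw [hX₂bc]
      rintro t (rfl | rfl | rfl | rfl) <;> simp [dot_add_left, hb, hc]
    exact charFn_eq_zero_of_measOf_eq_half hp.2 hI2a hcover hX₂y hay

/-- `a_max = μ({0}) ≤ 1/4`, with a decomposition `G = X₁ ⊕ X₂` satisfying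
I.1 and I.2(a), implies `μ ∈ TEC(G)`. -/
theorem stmt0 (p : G → ℝ) (hp : IsProb p)
    (hmax : ∀ x : G, p x ≤ p 0) (hle : p 0 ≤ 1/4)
    (X₁ X₂ : AddSubgroup G) (hX₁ : Nat.card X₁ = 2) (hX₂ : Nat.card X₂ = 4)
    (hinf : X₁ ⊓ X₂ = ⊥) (hsup : X₁ ⊔ X₂ = ⊤)
    (hI1 : ∀ x ∈ X₂, measOf p ((x + ·) '' (X₁ : Set G)) = 1/4)
    (hI2a : measOf p (X₂ : Set G) = 1/2) :
    TEC p :=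
  stmt0_general p hp X₁ X₂ hX₁ hX₂ hsup hI1 hI2a
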